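/- arXiv:math/0607721 — 5 statements merged into one kernel-verified Lean document; each statement's English description precedes it below -/
import Mathlib

section
/- Let k ≥ 1, let a, b ∈ ℤ^k, and let Ω be the k×(k+2) integer matrix whose first k columns form the k×k identity matrix, whose (k+1)-st column is a, and whose (k+2)-nd column is b. Then Ω is admissible if and only if: every a_i and every b_i is nonzero; gcd(a_i, b_i) = 1 for each i = 1,…,k; and for all i ≠ j it is not the case that both a_i = a_j and b_i = b_j, and not the case that both a_i = −a_j and b_i = −b_j. -/
/-- The `k × k` minor of a `k × n` integer matrix `Ω` on the set `s` of column indices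
(taken in increasing order); junk value `0` if `s` does not have exactly `k` elements. -/
def minorOn {k n : ℕ} (Ω : Matrix (Fin k) (Fin n) ℤ) (s : Finset (Fin n)) : ℤ :=
  if h : s.card = k then (Ω.submatrix id (s.orderEmbOfFin h)).det else 0

/-- A weight matrix is non-degenerate if all of its `k × k` minors are nonzero. -/
def NonDegenerate {k n : ℕ} (Ω : Matrix (Fin k) (Fin n) ℤ) : Prop :=
  ∀ s : Finset (Fin n), s.card = k → minorOn Ω s ≠ 0

/-- The gcd `d` of all `k × k` minors of `Ω`. -/
def minorGcd {k n : ℕ} (Ω : Matrix (Fin k) (Fin n) ℤ) : ℤ :=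
  ((Finset.univ : Finset (Fin n)).powersetCard k).gcd (minorOn Ω)

/-- A non-degenerate weight matrix `Ω` is admissible if for every `(k+1)`-element set `A`
of column indices, the gcd of the `k × k` minors of `Ω` on the `k`-element subsets of `A`
equals the gcd `d` of all `k × k` minors of `Ω`. -/
def Admissible {k n : ℕ} (Ω : Matrix (Fin k) (Fin n) ℤ) : Prop :=
  NonDegenerate Ω ∧
    ∀ A : Finset (Fin n), A.card = k + 1 →
      (A.powersetCard k).gcd (minorOn Ω) = minorGcd Ω

/-- The `k × (k+2)` weight matrix whose first `k` columns form the identity,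
whose `(k+1)`-st column is `a`, and whose `(k+2)`-nd column is `b`. -/
def weightMatrix {k : ℕ} (a b : Fin k → ℤ) : Matrix (Fin k) (Fin (k+2)) ℤ :=
  Matrix.of fun i j =>
    if (j : ℕ) < k then (if (i : ℕ) = (j : ℕ) then 1 else 0)
    else if (j : ℕ) = k then a i else b i

open Matrix Finset

/-!
Write `e₁, …, e_k` for the identity columns of `Ω = (I | a | b)` and `Δ_{p,q}` for the minor
omitting columns `p` and `q`. Up to sign, `Δ_{a,b} = 1`, `Δ_{eᵢ,b} = aᵢ`, `Δ_{eᵢ,a} = bᵢ` and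
`Δ_{eᵢ,eⱼ} = aᵢbⱼ - aⱼbᵢ`, the last by the Weinstein–Aronszajn identity
`det (1 + UV) = det (1 + VU)` with `U` of rank two. Hence `d = 1`, non-degeneracy says that all
these numbers are nonzero, and the only `(k+1)`-set of columns whose minors can have a
nontrivial common divisor is the complement of `eᵢ`, where that divisor is `gcd(aᵢ, bᵢ)`
because every cross term `aᵢbⱼ - aⱼbᵢ` is a combination of `aᵢ` and `bᵢ`. Finally, for coprime
pairs `aᵢbⱼ = aⱼbᵢ` forces `aᵢ = ±aⱼ` and then `(aᵢ, bᵢ) = ±(aⱼ, bⱼ)`.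
-/

theorem Matrix.submatrix_id_update {m n α : Type*} [DecidableEq m] (M : Matrix m n α) (f : m → n)
    (i : m) (c : n) :
    M.submatrix id (Function.update f i c) = (M.submatrix id f).updateCol i (M.col c) := by
  ext r l
  rcases eq_or_ne l i with rfl | hl
  · simp
  · simp [hl]

section Determinants

variable {m n R : Type*} [Fintype m] [DecidableEq m] [CommRing R]

theorem Matrix.associated_det_submatrix_of_range_eq (M : Matrix m n R) {f g : m → n}
    (hf : Function.Injective f) (hg : Function.Injective g) (h : Set.range f = Set.range g) :
    Associated (M.submatrix id g).det (M.submatrix id f).det := by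
  let σ : Equiv.Perm m :=
    (Equiv.ofInjective g hg).trans ((Equiv.setCongr h.symm).trans (Equiv.ofInjective f hf).symm)
  have hσ : f ∘ σ = g := funext fun x => by simp [σ, Equiv.apply_ofInjective_symm]
  rw [← hσ]
  change Associated ((M.submatrix id f).submatrix id σ).det _
  rw [det_permute']
  exact associated_unit_mul_left _ _ ((Equiv.Perm.sign σ).isUnit.map (Int.castRingHom R))

theorem Matrix.det_one_updateCol (i : m) (v : m → R) :
    ((1 : Matrix m m R).updateCol i v).det = v i := by
  rw [← cramer_apply, cramer_one, Module.End.one_apply]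

theorem Matrix.det_one_updateCol_updateCol {i j : m} (hij : i ≠ j) (u v : m → R) :
    (((1 : Matrix m m R).updateCol i u).updateCol j v).det = u i * v j - u j * v i := by
  let U : Matrix m (Fin 2) R :=
    of fun r => ![u r - Pi.single (M := fun _ => R) i 1 r, v r - Pi.single (M := fun _ => R) j 1 r]
  let V : Matrix (Fin 2) m R := of ![Pi.single i 1, Pi.single j 1]
  have hUV : ((1 : Matrix m m R).updateCol i u).updateCol j v = 1 + U * V := by
    ext r l
    simp only [Matrix.add_apply, Matrix.mul_apply, Fin.sum_univ_two, U, V, of_apply, cons_val_zero,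
      cons_val_one, updateCol_apply, one_apply, Pi.single_apply]
    split_ifs <;> simp_all
  have hVU : 1 + V * U = !![u i, v i; u j, v j] := by
    ext c c'
    fin_cases c <;> fin_cases c' <;> simp [U, V, Pi.single_apply, hij, hij.symm]
  rw [hUV, det_one_add_mul_comm, hVU, det_fin_two_of]
  ring

end Determinants

theorem Function.Injective.update_of_forall_ne {α β : Type*} [DecidableEq α] {f : α → β}
    (hf : Function.Injective f) {c : β} (hc : ∀ x, f x ≠ c) (i : α) :
    Function.Injective (Function.update f i c) := by
  intro x y h
  simp only [Function.update_apply] at h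
  split_ifs at h with hx hy hy
  · rw [hx, hy]
  · exact absurd h.symm (hc y)
  · exact absurd h (hc x)
  · exact hf h

theorem minorOn_associated_det_submatrix {k n : ℕ} (Ω : Matrix (Fin k) (Fin n) ℤ)
    {s : Finset (Fin n)} (hs : s.card = k) {g : Fin k → Fin n} (hg : Function.Injective g)
    (hgs : ∀ j, g j ∈ s) :
    Associated (minorOn Ω s) (Ω.submatrix id g).det := by
  rw [minorOn, dif_pos hs]
  refine Matrix.associated_det_submatrix_of_range_eq Ω hg (s.orderEmbOfFin hs).injective ?_
  have himage : univ.image g = s := eq_of_subset_of_card_le (by simpa [subset_iff] using hgs)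
    (by rw [hs, card_image_of_injective _ hg, card_univ, Fintype.card_fin])
  rw [range_orderEmbOfFin, ← himage, coe_image, coe_univ, Set.image_univ]

section ComplementsOfPairs

variable {α : Type*} [Fintype α] [DecidableEq α] {k : ℕ}

theorem Finset.card_compl_pair (hα : Fintype.card α = k + 2) {p q : α} (hpq : p ≠ q) :
    ({p, q}ᶜ : Finset α).card = k := by
  rw [card_compl, card_pair hpq, hα, Nat.add_sub_cancel]

theorem Finset.exists_eq_compl_pair (hα : Fintype.card α = k + 2) {s : Finset α}
    (hs : s.card = k) : ∃ p q, p ≠ q ∧ s = {p, q}ᶜ := by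
  obtain ⟨p, q, hpq, h⟩ := card_eq_two.mp (by rw [card_compl, hs, hα]; omega : sᶜ.card = 2)
  exact ⟨p, q, hpq, by rw [← h, compl_compl]⟩

theorem Finset.exists_eq_compl_singleton (hα : Fintype.card α = k + 2) {s : Finset α}
    (hs : s.card = k + 1) : ∃ p, s = {p}ᶜ := by
  obtain ⟨p, h⟩ := card_eq_one.mp (by rw [card_compl, hs, hα]; omega : sᶜ.card = 1)
  exact ⟨p, by rw [← h, compl_compl]⟩

theorem Finset.exists_eq_compl_pair_of_mem_powersetCard_compl (hα : Fintype.card α = k + 2)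
    {p : α} {s : Finset α} (hs : s ∈ ({p}ᶜ : Finset α).powersetCard k) :
    ∃ q, p ≠ q ∧ s = {p, q}ᶜ := by
  obtain ⟨hsub, hcard⟩ := mem_powersetCard.mp hs
  obtain ⟨x, y, hxy, rfl⟩ := exists_eq_compl_pair hα hcard
  have hp : p ∈ ({x, y} : Finset α) := by simpa using compl_subset_compl.mp hsub
  rcases mem_insert.mp hp with rfl | hp
  · exact ⟨y, hxy, rfl⟩
  · obtain rfl := mem_singleton.mp hp
    exact ⟨x, hxy.symm, by rw [pair_comm]⟩

theorem Finset.compl_pair_mem_powersetCard_compl (hα : Fintype.card α = k + 2) {p q : α}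
    (hpq : p ≠ q) : ({p, q}ᶜ : Finset α) ∈ ({p}ᶜ : Finset α).powersetCard k :=
  mem_powersetCard.mpr ⟨compl_subset_compl.mpr (by simp), card_compl_pair hα hpq⟩

end ComplementsOfPairs

theorem nonDegenerate_iff_minorOn_compl_pair_ne_zero {k : ℕ}
    (Ω : Matrix (Fin k) (Fin (k + 2)) ℤ) :
    NonDegenerate Ω ↔ ∀ p q, p ≠ q → minorOn Ω {p, q}ᶜ ≠ 0 := by
  refine ⟨fun h p q hpq => h _ (card_compl_pair (Fintype.card_fin _) hpq), fun h s hs => ?_⟩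
  obtain ⟨p, q, hpq, rfl⟩ := exists_eq_compl_pair (Fintype.card_fin _) hs
  exact h p q hpq

theorem Finset.gcd_eq_one_iff_isUnit {β γ : Type*} [CommMonoidWithZero γ]
    [NormalizedGCDMonoid γ] {s : Finset β} {f : β → γ} : s.gcd f = 1 ↔ IsUnit (s.gcd f) := by
  rw [← normalize_eq_one, normalize_gcd]

theorem Int.eq_and_eq_or_eq_neg_and_eq_neg_of_mul_eq_mul {x y x' y' : ℤ} (hx : x ≠ 0)
    (h : IsCoprime x y) (h' : IsCoprime x' y') (he : x * y' = x' * y) :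
    (x = x' ∧ y = y') ∨ (x = -x' ∧ y = -y') := by
  have hxx' : Associated x x' :=
    associated_of_dvd_dvd (h.dvd_of_dvd_mul_right ⟨y', he.symm⟩) (h'.dvd_of_dvd_mul_right ⟨y, he⟩)
  rcases Int.associated_iff.mp hxx' with rfl | rfl
  · exact Or.inl ⟨rfl, (mul_left_cancel₀ hx he).symm⟩
  · refine Or.inr ⟨rfl, mul_left_cancel₀ (neg_ne_zero.mp hx) ?_⟩
    linarith

section WeightMatrix

variable {k : ℕ}

def aCol (k : ℕ) : Fin (k + 2) := Fin.natAdd k 0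

def bCol (k : ℕ) : Fin (k + 2) := Fin.natAdd k 1

theorem castAdd_ne_aCol (i : Fin k) : Fin.castAdd 2 i ≠ aCol k := by
  simp [Fin.ext_iff, aCol, i.isLt.ne]

theorem castAdd_ne_bCol (i : Fin k) : Fin.castAdd 2 i ≠ bCol k := by
  simp [Fin.ext_iff, bCol]; omega

theorem aCol_ne_bCol : aCol k ≠ bCol k := by
  simp [Fin.ext_iff, aCol, bCol]

theorem eq_castAdd_or_aCol_or_bCol (c : Fin (k + 2)) :
    (∃ i, c = Fin.castAdd 2 i) ∨ c = aCol k ∨ c = bCol k := by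
  induction c using Fin.addCases with
  | left i => exact Or.inl ⟨i, rfl⟩
  | right j => fin_cases j <;> simp [aCol, bCol]

variable (a b : Fin k → ℤ)

theorem weightMatrix_submatrix_castAdd :
    (weightMatrix a b).submatrix id (Fin.castAdd 2) = 1 := by
  ext r i
  simp [weightMatrix, one_apply, Fin.ext_iff]

theorem weightMatrix_col_aCol : (weightMatrix a b).col (aCol k) = a := by
  ext r
  simp [weightMatrix, aCol]

theorem weightMatrix_col_bCol : (weightMatrix a b).col (bCol k) = b := by
  ext r
  simp [weightMatrix, bCol]

theorem minorOn_weightMatrix_compl_aCol_bCol :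
    Associated (minorOn (weightMatrix a b) {aCol k, bCol k}ᶜ) 1 := by
  have h := minorOn_associated_det_submatrix (weightMatrix a b)
    (card_compl_pair (Fintype.card_fin _) aCol_ne_bCol) (Fin.castAdd_injective k 2)
    (fun i => by simp [castAdd_ne_aCol, castAdd_ne_bCol])
  rwa [weightMatrix_submatrix_castAdd, det_one] at h

theorem minorOn_weightMatrix_compl_castAdd_bCol (i : Fin k) :
    Associated (minorOn (weightMatrix a b) {Fin.castAdd 2 i, bCol k}ᶜ) (a i) := by
  have h := minorOn_associated_det_submatrix (weightMatrix a b)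
    (card_compl_pair (Fintype.card_fin _) (castAdd_ne_bCol i))
    ((Fin.castAdd_injective k 2).update_of_forall_ne castAdd_ne_aCol i)
    (fun j => by
      rcases eq_or_ne j i with rfl | hj
      · simp [(castAdd_ne_aCol j).symm, aCol_ne_bCol]
      · simp [hj, castAdd_ne_bCol])
  rwa [submatrix_id_update, weightMatrix_submatrix_castAdd, weightMatrix_col_aCol,
    det_one_updateCol] at h

theorem minorOn_weightMatrix_compl_castAdd_aCol (i : Fin k) :
    Associated (minorOn (weightMatrix a b) {Fin.castAdd 2 i, aCol k}ᶜ) (b i) := by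
  have h := minorOn_associated_det_submatrix (weightMatrix a b)
    (card_compl_pair (Fintype.card_fin _) (castAdd_ne_aCol i))
    ((Fin.castAdd_injective k 2).update_of_forall_ne castAdd_ne_bCol i)
    (fun j => by
      rcases eq_or_ne j i with rfl | hj
      · simp [(castAdd_ne_bCol j).symm, aCol_ne_bCol.symm]
      · simp [hj, castAdd_ne_aCol])
  rwa [submatrix_id_update, weightMatrix_submatrix_castAdd, weightMatrix_col_bCol,
    det_one_updateCol] at h

theorem minorOn_weightMatrix_compl_castAdd_castAdd {i j : Fin k} (hij : i ≠ j) :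
    Associated (minorOn (weightMatrix a b) {Fin.castAdd 2 i, Fin.castAdd 2 j}ᶜ)
      (a i * b j - a j * b i) := by
  have hg := (Fin.castAdd_injective k 2).update_of_forall_ne castAdd_ne_aCol i
  have h := minorOn_associated_det_submatrix (weightMatrix a b)
    (card_compl_pair (Fintype.card_fin _) ((Fin.castAdd_injective k 2).ne hij))
    (hg.update_of_forall_ne (c := bCol k) (fun l => by
      rcases eq_or_ne l i with rfl | hl
      · simp [aCol_ne_bCol]
      · simp [hl, castAdd_ne_bCol]) j)
    (fun l => by
      rcases eq_or_ne l j with rfl | hlj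
      · simp [(castAdd_ne_bCol _).symm]
      rcases eq_or_ne l i with rfl | hli
      · simp [hlj, (castAdd_ne_aCol _).symm]
      · simp [hlj, hli, (Fin.castAdd_injective k 2).ne])
  rwa [submatrix_id_update, submatrix_id_update, weightMatrix_submatrix_castAdd,
    weightMatrix_col_aCol, weightMatrix_col_bCol, det_one_updateCol_updateCol hij] at h

theorem minorGcd_weightMatrix : minorGcd (weightMatrix a b) = 1 :=
  gcd_eq_one_iff_isUnit.mpr <| isUnit_of_dvd_unit
    (gcd_dvd <| mem_powersetCard.mpr
      ⟨subset_univ _, card_compl_pair (Fintype.card_fin _) aCol_ne_bCol⟩)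
    (associated_one_iff_isUnit.mp (minorOn_weightMatrix_compl_aCol_bCol a b))

theorem nonDegenerate_weightMatrix_iff :
    NonDegenerate (weightMatrix a b) ↔
      (∀ i, a i ≠ 0) ∧ (∀ i, b i ≠ 0) ∧ ∀ i j, i ≠ j → a i * b j - a j * b i ≠ 0 := by
  have hA := minorOn_weightMatrix_compl_castAdd_bCol a b
  have hB := minorOn_weightMatrix_compl_castAdd_aCol a b
  have hAB := @minorOn_weightMatrix_compl_castAdd_castAdd _ a b
  have hone := (minorOn_weightMatrix_compl_aCol_bCol a b).ne_zero_iff.mpr one_ne_zero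
  rw [nonDegenerate_iff_minorOn_compl_pair_ne_zero]
  constructor
  · intro h
    exact ⟨fun i => (hA i).ne_zero_iff.mp (h _ _ (castAdd_ne_bCol i)),
      fun i => (hB i).ne_zero_iff.mp (h _ _ (castAdd_ne_aCol i)),
      fun i j hij => (hAB hij).ne_zero_iff.mp (h _ _ ((Fin.castAdd_injective k 2).ne hij))⟩
  · rintro ⟨ha, hb, hab⟩ p q hpq
    rcases eq_castAdd_or_aCol_or_bCol p with ⟨i, rfl⟩ | rfl | rfl <;>
      rcases eq_castAdd_or_aCol_or_bCol q with ⟨j, rfl⟩ | rfl | rfl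
    · exact (hAB (ne_of_apply_ne _ hpq)).ne_zero_iff.mpr (hab i j (ne_of_apply_ne _ hpq))
    · exact (hB i).ne_zero_iff.mpr (hb i)
    · exact (hA i).ne_zero_iff.mpr (ha i)
    · exact pair_comm (aCol k) _ ▸ (hB j).ne_zero_iff.mpr (hb j)
    · exact absurd rfl hpq
    · exact hone
    · exact pair_comm (bCol k) _ ▸ (hA j).ne_zero_iff.mpr (ha j)
    · exact pair_comm (bCol k) _ ▸ hone
    · exact absurd rfl hpq

theorem isUnit_gcd_minorOn_compl_castAdd_iff (i : Fin k) :
    IsUnit ((({Fin.castAdd 2 i}ᶜ : Finset (Fin (k + 2))).powersetCard k).gcd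
      (minorOn (weightMatrix a b))) ↔ IsCoprime (a i) (b i) := by
  have hcard := Fintype.card_fin (k + 2)
  rw [← isRelPrime_iff_isCoprime]
  constructor
  · intro h d hda hdb
    refine isUnit_of_dvd_unit (dvd_gcd fun s hs => ?_) h
    obtain ⟨q, hq, rfl⟩ := exists_eq_compl_pair_of_mem_powersetCard_compl hcard hs
    rcases eq_castAdd_or_aCol_or_bCol q with ⟨j, rfl⟩ | rfl | rfl
    · have hij : i ≠ j := ne_of_apply_ne _ hq
      exact (minorOn_weightMatrix_compl_castAdd_castAdd a b hij).dvd_iff_dvd_right.mpr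
        (dvd_sub (hda.mul_right _) (hdb.mul_left _))
    · exact (minorOn_weightMatrix_compl_castAdd_aCol a b i).dvd_iff_dvd_right.mpr hdb
    · exact (minorOn_weightMatrix_compl_castAdd_bCol a b i).dvd_iff_dvd_right.mpr hda
  · intro h
    exact h
      ((gcd_dvd (compl_pair_mem_powersetCard_compl hcard (castAdd_ne_bCol i))).trans
        (minorOn_weightMatrix_compl_castAdd_bCol a b i).dvd)
      ((gcd_dvd (compl_pair_mem_powersetCard_compl hcard (castAdd_ne_aCol i))).trans
        (minorOn_weightMatrix_compl_castAdd_aCol a b i).dvd)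

theorem admissible_weightMatrix_iff :
    Admissible (weightMatrix a b) ↔
      NonDegenerate (weightMatrix a b) ∧ ∀ i, IsCoprime (a i) (b i) := by
  have hcard := Fintype.card_fin (k + 2)
  simp only [Admissible, minorGcd_weightMatrix, gcd_eq_one_iff_isUnit]
  refine and_congr_right fun _ => ⟨fun h i => ?_, fun h A hA => ?_⟩
  · exact (isUnit_gcd_minorOn_compl_castAdd_iff a b i).mp
      (h _ (by rw [card_compl, card_singleton, hcard]; rfl))
  obtain ⟨p, rfl⟩ := exists_eq_compl_singleton hcard hA
  have hone := associated_one_iff_isUnit.mp (minorOn_weightMatrix_compl_aCol_bCol a b)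
  rcases eq_castAdd_or_aCol_or_bCol p with ⟨i, rfl⟩ | rfl | rfl
  · exact (isUnit_gcd_minorOn_compl_castAdd_iff a b i).mpr (h i)
  · exact isUnit_of_dvd_unit (gcd_dvd (compl_pair_mem_powersetCard_compl hcard aCol_ne_bCol)) hone
  · refine isUnit_of_dvd_unit (gcd_dvd ?_) hone
    rw [pair_comm]
    exact compl_pair_mem_powersetCard_compl hcard aCol_ne_bCol.symm

end WeightMatrix

theorem stmt1_general {k : ℕ} (a b : Fin k → ℤ) :
    Admissible (weightMatrix a b) ↔
      ((∀ i, a i ≠ 0) ∧ (∀ i, b i ≠ 0) ∧ (∀ i, Int.gcd (a i) (b i) = 1) ∧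
        ∀ i j, i ≠ j → ¬(a i = a j ∧ b i = b j) ∧ ¬(a i = -a j ∧ b i = -b j)) := by
  simp only [admissible_weightMatrix_iff, nonDegenerate_weightMatrix_iff,
    ← Int.isCoprime_iff_gcd_eq_one]
  constructor
  · rintro ⟨⟨ha, hb, hab⟩, hcop⟩
    refine ⟨ha, hb, hcop, fun i j hij => ⟨?_, ?_⟩⟩ <;>
      exact fun ⟨hai, hbi⟩ => hab i j hij (by rw [hai, hbi]; ring)
  · rintro ⟨ha, hb, hcop, hpair⟩
    refine ⟨⟨ha, hb, fun i j hij hab => ?_⟩, hcop⟩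
    rcases Int.eq_and_eq_or_eq_neg_and_eq_neg_of_mul_eq_mul (ha i) (hcop i) (hcop j)
      (sub_eq_zero.mp hab) with h | h
    · exact (hpair i j hij).1 h
    · exact (hpair i j hij).2 h

theorem stmt1 {k : ℕ} (hk : 1 ≤ k) (a b : Fin k → ℤ) :
    Admissible (weightMatrix a b) ↔
      ((∀ i, a i ≠ 0) ∧ (∀ i, b i ≠ 0) ∧ (∀ i, Int.gcd (a i) (b i) = 1) ∧
        ∀ i j, i ≠ j → ¬(a i = a j ∧ b i = b j) ∧ ¬(a i = -a j ∧ b i = -b j)) :=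
  stmt1_general a b
end

section
/- Every non-degenerate weight matrix is equivalent to a reduced one: for every Ω ∈ M_{k,n}(ℤ) with 1 ≤ k ≤ n all of whose k×k minors are nonzero, there exists Ω' ∈ M_{k,n}(ℤ) such that the rows of Ω' span the same ℚ-subspace of ℚ^n as the rows of Ω, every k×k minor of Ω' is nonzero, and the gcd of all k×k minors of Ω' equals 1. -/
open Matrix Module

theorem exists_det_submatrix_ne_zero_of_linearIndependent {K : Type*} [Field K] {k n : ℕ}
    (A : Matrix (Fin k) (Fin n) K) (hA : LinearIndependent K A.row) :
    ∃ (s : Finset (Fin n)) (h : s.card = k), (A.submatrix id (s.orderEmbOfFin h)).det ≠ 0 := by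
  have hcols : Submodule.span K (Set.range A.col) = ⊤ := by
    apply Submodule.eq_top_of_finrank_eq
    rw [← rank_eq_finrank_span_cols, hA.rank_matrix, finrank_fin_fun, Fintype.card_fin]
  obtain ⟨b, -, -, hb_span, hb_li⟩ :=
    exists_linearIndepOn_extension (linearIndepOn_empty K A.col) (Set.subset_univ _)
  set s := b.toFinite.toFinset
  have hs_li : LinearIndependent K fun j : s => A.col j := by
    rwa [LinearIndepOn, ← Set.Finite.coe_toFinset b.toFinite] at hb_li
  have hs_span : Submodule.span K (Set.range fun j : s => A.col j) = ⊤ := by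
    have hrange : (Set.range fun j : s => A.col j) = A.col '' b := by
      ext v; simp [s]
    rw [hrange, eq_top_iff, ← hcols, Submodule.span_le, ← Set.image_univ]
    exact hb_span
  have hs : s.card = k := by
    rw [← Fintype.card_coe, linearIndependent_iff_card_eq_finrank_span.mp hs_li, Set.finrank,
      hs_span, finrank_top, finrank_fin_fun]
  refine ⟨s, hs, ?_⟩
  have : IsUnit (A.submatrix id (s.orderEmbOfFin hs)) :=
    linearIndependent_cols_iff_isUnit.mp (hs_li.comp _ (s.orderIsoOfFin hs).injective)
  exact ((isUnit_iff_isUnit_det _).mp this).ne_zero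

theorem minorOn_mul {k n : ℕ} (P : Matrix (Fin k) (Fin k) ℤ) (Q : Matrix (Fin k) (Fin n) ℤ)
    (s : Finset (Fin n)) : minorOn (P * Q) s = P.det * minorOn Q s := by
  unfold minorOn
  split_ifs
  · rw [← det_mul, submatrix_mul _ _ _ id _ Function.bijective_id, submatrix_id_id]
  · rw [mul_zero]

theorem linearIndependent_row_of_minorOn_ne_zero {k n : ℕ} {Ω : Matrix (Fin k) (Fin n) ℤ}
    {s : Finset (Fin n)} (h : minorOn Ω s ≠ 0) : LinearIndependent ℤ Ω.row := by
  unfold minorOn at h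
  split_ifs at h with hs
  · exact (linearIndependent_rows_of_det_ne_zero h).of_comp
      (LinearMap.funLeft ℤ ℤ (s.orderEmbOfFin hs))
  · exact absurd rfl h

theorem exists_not_dvd_minorOn_of_linearIndependent {k n : ℕ} (M : Matrix (Fin k) (Fin n) ℤ)
    (p : ℕ) [Fact p.Prime] (hM : LinearIndependent (ZMod p) (M.map (Int.cast : ℤ → ZMod p)).row) :
    ∃ s : Finset (Fin n), s.card = k ∧ ¬ (p : ℤ) ∣ minorOn M s := by
  obtain ⟨s, hs, hdet⟩ := exists_det_submatrix_ne_zero_of_linearIndependent _ hM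
  refine ⟨s, hs, fun hdvd => hdet ?_⟩
  rw [minorOn, dif_pos hs, ← ZMod.intCast_zmod_eq_zero_iff_dvd, Int.cast_det] at hdvd
  exact hdvd

theorem minorGcd_eq_one_of_forall_prime {k n : ℕ} (M : Matrix (Fin k) (Fin n) ℤ)
    (hM : ∀ p : ℕ, p.Prime → ∃ s : Finset (Fin n), s.card = k ∧ ¬ (p : ℤ) ∣ minorOn M s) :
    minorGcd M = 1 := by
  have hnonneg : 0 ≤ minorGcd M := by
    rw [minorGcd, ← Finset.normalize_gcd, ← Int.abs_eq_normalize]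
    exact abs_nonneg _
  suffices (minorGcd M).natAbs = 1 by omega
  refine Nat.eq_one_iff_not_exists_prime_dvd.mpr fun p hp hdvd => ?_
  obtain ⟨s, hs, hndvd⟩ := hM p hp
  exact hndvd ((Int.natCast_dvd.mpr hdvd).trans
    (Finset.gcd_dvd (Finset.mem_powersetCard_univ.mpr hs)))

theorem Module.Basis.linearIndependent_map {R K ι : Type*} [CommRing R] [Field K] [Fintype ι]
    [DecidableEq ι] (φ : R →+* K) (b : Basis ι R (ι → R)) :
    LinearIndependent K fun i j => φ (b i j) := by
  let C := (Pi.basisFun R ι).toMatrix b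
  have hC : IsUnit (C.map φ) := by
    let := (Pi.basisFun R ι).invertibleToMatrix b
    exact (isUnit_of_invertible C).map φ.mapMatrix
  convert linearIndependent_cols_iff_isUnit.mpr hC using 1
  ext i j
  simp [C, Basis.toMatrix_apply, col]

theorem minorGcd_rows_of_basis_eq_one {k n : ℕ} (b : Basis (Fin n) ℤ (Fin n → ℤ))
    (g : Fin k ↪ Fin n) :
    minorGcd (Matrix.of fun i => b (g i)) = 1 := by
  refine minorGcd_eq_one_of_forall_prime _ fun p hp => ?_
  have := Fact.mk hp
  apply exists_not_dvd_minorOn_of_linearIndependent _ p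
  convert (b.linearIndependent_map (Int.castRingHom (ZMod p))).comp g g.injective using 1
  ext i j
  simp [row]

theorem span_row_mul_le {R m n : Type*} [CommRing R] [Fintype m] (P : Matrix m m R)
    (Q : Matrix m n R) :
    Submodule.span R (Set.range (P * Q).row) ≤ Submodule.span R (Set.range Q.row) := by
  rw [Submodule.span_le]
  rintro _ ⟨i, rfl⟩
  have hrow : (P * Q).row i = ∑ l, P i l • Q.row l := by
    ext j; simp [mul_apply, row]
  rw [hrow]
  exact Submodule.sum_mem _ fun l _ => Submodule.smul_mem _ _ (Submodule.subset_span ⟨l, rfl⟩)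

theorem span_row_mul_of_isUnit {R m n : Type*} [CommRing R] [Fintype m] [DecidableEq m]
    {P : Matrix m m R} (hP : IsUnit P) (Q : Matrix m n R) :
    Submodule.span R (Set.range (P * Q).row) = Submodule.span R (Set.range Q.row) := by
  obtain ⟨u, rfl⟩ := hP
  refine (span_row_mul_le _ Q).antisymm ?_
  have h := span_row_mul_le (↑u⁻¹ : Matrix m m R) ((u : Matrix m m R) * Q)
  rwa [← Matrix.mul_assoc, Units.inv_mul, Matrix.one_mul] at h

theorem exists_eq_mul_rows_of_basis {k n : ℕ} (Ω : Matrix (Fin k) (Fin n) ℤ)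
    (hΩ : LinearIndependent ℤ Ω.row) :
    ∃ (A : Matrix (Fin k) (Fin k) ℤ) (b : Basis (Fin n) ℤ (Fin n → ℤ)) (g : Fin k ↪ Fin n),
      Ω = A * Matrix.of fun i => b (g i) := by
  obtain ⟨m, snf⟩ := (Submodule.span ℤ (Set.range Ω.row)).smithNormalForm (Pi.basisFun ℤ (Fin n))
  let e : Fin k ≃ Fin m := (Basis.span hΩ).indexEquiv snf.bN
  have hmem (i : Fin k) : Ω.row i ∈ Submodule.span ℤ (Set.range Ω.row) :=
    Submodule.subset_span ⟨i, rfl⟩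
  refine ⟨Matrix.of fun i l => snf.bN.repr ⟨Ω.row i, hmem i⟩ (e l) * snf.a (e l), snf.bM,
    e.toEmbedding.trans snf.f, ?_⟩
  ext i j
  have hrow := congrArg (fun v : Submodule.span ℤ (Set.range Ω.row) => (v : Fin n → ℤ) j)
    (snf.bN.sum_repr ⟨Ω.row i, hmem i⟩)
  simp only [Submodule.coe_sum, Submodule.coe_smul, snf.snf, Finset.sum_apply, Pi.smul_apply,
    smul_eq_mul] at hrow
  rw [← e.sum_comp] at hrow
  simpa [mul_apply, mul_assoc] using hrow.symm

theorem stmt2_general {k n : ℕ} (hkn : k ≤ n) (Ω : Matrix (Fin k) (Fin n) ℤ)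
    (hΩ : NonDegenerate Ω) :
    ∃ Ω' : Matrix (Fin k) (Fin n) ℤ,
      Submodule.span ℚ (Set.range fun i : Fin k => fun j : Fin n => (Ω' i j : ℚ)) =
        Submodule.span ℚ (Set.range fun i : Fin k => fun j : Fin n => (Ω i j : ℚ)) ∧
      NonDegenerate Ω' ∧ minorGcd Ω' = 1 := by
  obtain ⟨s₀, -, hs₀⟩ := Finset.exists_subset_card_eq
    (show k ≤ (Finset.univ : Finset (Fin n)).card by simpa using hkn)
  obtain ⟨A, b, g, hfact⟩ :=
    exists_eq_mul_rows_of_basis Ω (linearIndependent_row_of_minorOn_ne_zero (hΩ s₀ hs₀))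
  have hA : A.det ≠ 0 := by
    have := hΩ s₀ hs₀
    rw [hfact, minorOn_mul] at this
    exact left_ne_zero_of_mul this
  refine ⟨_, ?_, fun s hs h0 => hΩ s hs ?_, minorGcd_rows_of_basis_eq_one b g⟩
  · have hAq : IsUnit (A.map (Int.castRingHom ℚ)) := by
      rw [isUnit_iff_isUnit_det, ← RingHom.mapMatrix_apply, ← RingHom.map_det, isUnit_iff_ne_zero]
      simpa using hA
    change Submodule.span ℚ (Set.range (Matrix.map _ (Int.castRingHom ℚ)).row) =
      Submodule.span ℚ (Set.range (Ω.map (Int.castRingHom ℚ)).row)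
    rw [hfact, Matrix.map_mul, span_row_mul_of_isUnit hAq]
  · rw [hfact, minorOn_mul, h0, mul_zero]

/-- Every non-degenerate weight matrix is equivalent to a reduced one. -/
theorem stmt2 {k n : ℕ} (hk : 1 ≤ k) (hkn : k ≤ n) (Ω : Matrix (Fin k) (Fin n) ℤ)
    (hΩ : NonDegenerate Ω) :
    ∃ Ω' : Matrix (Fin k) (Fin n) ℤ,
      Submodule.span ℚ (Set.range fun i : Fin k => fun j : Fin n => (Ω' i j : ℚ)) =
        Submodule.span ℚ (Set.range fun i : Fin k => fun j : Fin n => (Ω i j : ℚ)) ∧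
      NonDegenerate Ω' ∧ minorGcd Ω' = 1 :=
  stmt2_general hkn Ω hΩ
end

section
/- Let k ≥ 0 and let v_0, v_1, …, v_{k+2} ∈ ℤ² be isotropy data; that is, writing v_i = (m_i, n_i), one has v_0 = −v_{k+2}, the first coordinates satisfy m_0 < m_1 < ⋯ < m_{k+2}, and (n_{i+1}−n_i)(m_i−m_{i−1}) > (n_i−n_{i−1})(m_{i+1}−m_i) for 1 ≤ i ≤ k+1. Let S = {v_0,…,v_{k+2}} ∪ {−v_0,…,−v_{k+2}}, regarded as a subset of ℝ². Then S = −S, S has exactly 2k+4 elements, and every point of S is an extreme point of the convex hull of S; that is, the points v_0, v_1, …, v_{k+2}, −v_1, …, −v_{k+1} are the vertices of a centrally symmetric convex polygon. -/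
/-!
The points `v_0, …, v_{k+2}` form a strictly convex chain. For `c` strictly between the slopes
of the two edges at `v_i`, the functional `(x, y) ↦ c x - y` increases strictly along the chain
up to `v_i` and decreases strictly after it, so on the chain it is maximal exactly at `v_i` and
its minimum is only attained at an endpoint. As the endpoints are `v_0 = -v_{k+2}`, that minimum
is at least minus the maximum, so the functional is also smaller at every `-v_j`
(`0 < j < k + 2`) than at `v_i`. Hence every `v_i` is strictly exposed in `S` (and `v_i ≠ -v_j`,
which gives the count), and by central symmetry so is every `-v_i`.
-/

def symSet {k : ℕ} (v : Fin (k + 3) → ℤ × ℤ) : Set (ℝ × ℝ) :=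
  (fun p : ℤ × ℤ => ((p.1 : ℝ), (p.2 : ℝ))) '' (Set.range v ∪ -Set.range v)

open Set

lemma Set.neg_union_neg_self {α : Type*} [InvolutiveNeg α] (A : Set α) :
    -(A ∪ -A) = A ∪ -A := by
  rw [union_neg, neg_neg, union_comm]

section ExposedPoint

variable {𝕜 E : Type*} [AddCommGroup E] {S : Set E} {x : E}

lemma forall_neg_lt_of_forall_lt [Ring 𝕜] [PartialOrder 𝕜] [IsOrderedRing 𝕜] [Module 𝕜 E]
    {l : E →ₗ[𝕜] 𝕜} (hS : -S = S) (hlt : ∀ y ∈ S, y ≠ x → l y < l x) :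
    ∀ y ∈ S, y ≠ -x → (-l) y < (-l) (-x) := by
  intro y hy hne
  have := hlt (-y) (hS ▸ neg_mem_neg.2 hy) (by rintro rfl; simp at hne)
  simpa using this

variable [Field 𝕜] [LinearOrder 𝕜] [IsStrictOrderedRing 𝕜] [Module 𝕜 E] {l : E →ₗ[𝕜] 𝕜}

lemma apply_le_of_mem_convexHull (hlt : ∀ y ∈ S, y ≠ x → l y < l x) {y : E}
    (hy : y ∈ convexHull 𝕜 S) : l y ≤ l x := by
  refine convexHull_min (fun z hz => ?_) (convex_halfSpace_le l.isLinear (l x)) hy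
  rcases eq_or_ne z x with rfl | hne
  exacts [le_rfl, (hlt z hz hne).le]

lemma eq_of_mem_convexHull_of_le_apply (hlt : ∀ y ∈ S, y ≠ x → l y < l x) {y : E}
    (hy : y ∈ convexHull 𝕜 S) (hly : l x ≤ l y) : y = x := by
  have hsub : S ⊆ insert x (S \ {x}) := fun z hz => by
    rcases eq_or_ne z x with rfl | hne
    exacts [mem_insert _ _, mem_insert_of_mem _ ⟨hz, hne⟩]
  replace hy := convexHull_mono hsub hy
  rcases (S \ {x}).eq_empty_or_nonempty with hempty | hne
  · rwa [hempty, insert_empty_eq, convexHull_singleton, mem_singleton_iff] at hy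
  rw [convexHull_insert hne] at hy
  obtain ⟨x', hx', z, hz, hyxz⟩ := mem_convexJoin.1 hy
  rw [mem_singleton_iff.1 hx'] at hyxz
  obtain ⟨a, b, ha, hb, hab, rfl⟩ := hyxz
  have hlz : l z < l x := convexHull_min (fun w hw => hlt w hw.1 hw.2)
    (convex_halfSpace_lt l.isLinear (l x)) hz
  obtain rfl : a = 1 - b := by linear_combination hab
  have hb0 : b = 0 := by
    simp only [map_add, map_smul, smul_eq_mul] at hly
    nlinarith
  simp [hb0]

theorem mem_extremePoints_convexHull_of_forall_lt (hx : x ∈ S)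
    (hlt : ∀ y ∈ S, y ≠ x → l y < l x) : x ∈ (convexHull 𝕜 S).extremePoints 𝕜 := by
  refine ⟨subset_convexHull 𝕜 S hx, fun y₁ hy₁ y₂ hy₂ hseg => ?_⟩
  obtain ⟨a, b, ha, hb, hab, rfl⟩ := hseg
  refine eq_of_mem_convexHull_of_le_apply hlt hy₁ ?_
  have h₁ := apply_le_of_mem_convexHull hlt hy₁
  have h₂ := apply_le_of_mem_convexHull hlt hy₂
  obtain rfl : a = 1 - b := by linear_combination hab
  simp only [map_add, map_smul, smul_eq_mul] at h₁ h₂ ⊢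
  have h₂₁ : l y₂ ≤ l y₁ := le_of_mul_le_mul_left (by linarith) ha
  nlinarith

end ExposedPoint

section Unimodal

variable {α β : Type*} [LinearOrder α] [LinearOrder β] {f : α → β} {a i b j : α}

lemma lt_of_strictMonoOn_Icc_of_strictAntiOn_Icc (hmono : StrictMonoOn f (Icc a i))
    (hanti : StrictAntiOn f (Icc i b)) (hj : j ∈ Icc a b) (hji : j ≠ i) : f j < f i := by
  rcases hji.lt_or_gt with hlt | hgt
  · exact hmono ⟨hj.1, hlt.le⟩ ⟨hj.1.trans hlt.le, le_rfl⟩ hlt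
  · exact hanti ⟨le_rfl, hgt.le.trans hj.2⟩ ⟨hgt.le, hj.2⟩ hgt

lemma min_lt_of_strictMonoOn_Icc_of_strictAntiOn_Icc (hmono : StrictMonoOn f (Icc a i))
    (hanti : StrictAntiOn f (Icc i b)) (hj : j ∈ Ioo a b) : min (f a) (f b) < f j := by
  rcases le_total j i with hji | hij
  · exact min_lt_of_left_lt (hmono ⟨le_rfl, hj.1.le.trans hji⟩ ⟨hj.1.le, hji⟩ hj.1)
  · exact min_lt_of_right_lt (hanti ⟨hij, hj.2.le⟩ ⟨hij.trans hj.2.le, le_rfl⟩ hj.2)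

end Unimodal

namespace ConvexChain

variable {p : ℕ → ℝ × ℝ} {K : ℕ}

noncomputable def edgeSlope (p : ℕ → ℝ × ℝ) (j : ℕ) : ℝ :=
  ((p (j + 1)).2 - (p j).2) / ((p (j + 1)).1 - (p j).1)

def tilt (c : ℝ) : ℝ × ℝ →ₗ[ℝ] ℝ := c • LinearMap.fst ℝ ℝ ℝ - LinearMap.snd ℝ ℝ ℝ

lemma tilt_apply (c : ℝ) (q : ℝ × ℝ) : tilt c q = c * q.1 - q.2 := rfl

lemma tilt_lt_tilt_succ_iff {j : ℕ} (hx : (p j).1 < (p (j + 1)).1) (c : ℝ) :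
    tilt c (p j) < tilt c (p (j + 1)) ↔ edgeSlope p j < c := by
  rw [edgeSlope, div_lt_iff₀ (sub_pos.2 hx), tilt_apply, tilt_apply]
  constructor <;> intro h <;> linarith

lemma tilt_succ_lt_tilt_iff {j : ℕ} (hx : (p j).1 < (p (j + 1)).1) (c : ℝ) :
    tilt c (p (j + 1)) < tilt c (p j) ↔ c < edgeSlope p j := by
  rw [edgeSlope, lt_div_iff₀ (sub_pos.2 hx), tilt_apply, tilt_apply]
  constructor <;> intro h <;> linarith

lemma exists_edgeSlope_lt_lt (hs : ∀ j, j + 1 < K → edgeSlope p j < edgeSlope p (j + 1))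
    {i : ℕ} (hi : i ≤ K) :
    ∃ c, (∀ j < i, edgeSlope p j < c) ∧ ∀ j, i ≤ j → j < K → c < edgeSlope p j := by
  have hmono : MonotoneOn (edgeSlope p) (Iio K) :=
    (strictMonoOn_of_lt_add_one ordConnected_Iio fun j _ _ hj => hs j hj).monotoneOn
  obtain ⟨c, hleft, hright⟩ :
      ∃ c, (0 < i → edgeSlope p (i - 1) < c) ∧ (i < K → c < edgeSlope p i) := by
    by_cases h0 : 0 < i <;> by_cases hK : i < K
    · have := hs (i - 1) (by omega)
      rw [Nat.sub_add_cancel h0] at this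
      obtain ⟨c, h₁, h₂⟩ := exists_between this
      exact ⟨c, fun _ => h₁, fun _ => h₂⟩
    · exact ⟨edgeSlope p (i - 1) + 1, fun _ => lt_add_one _, fun h => absurd h hK⟩
    · exact ⟨edgeSlope p i - 1, fun h => absurd h h0, fun _ => sub_one_lt _⟩
    · exact ⟨0, fun h => absurd h h0, fun h => absurd h hK⟩
  refine ⟨c, fun j hj => ?_, fun j hij hj => ?_⟩
  · exact (hmono (show j < K by omega) (show i - 1 < K by omega) (by omega)).trans_lt
      (hleft (by omega))
  · exact (hright (by omega)).trans_le (hmono (show i < K by omega) hj hij)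

variable (hx : ∀ j < K, (p j).1 < (p (j + 1)).1)
include hx

lemma injOn_Iic : InjOn p (Iic K) := by
  have : StrictMonoOn (fun j => (p j).1) (Iic K) := strictMonoOn_Iic_of_lt_succ fun j hj => by
    simpa using hx j hj
  exact fun a ha b hb hab => this.injOn ha hb (congrArg Prod.fst hab)

variable (hs : ∀ j, j + 1 < K → edgeSlope p j < edgeSlope p (j + 1))
include hs

lemma exists_tilt_strictMonoOn_strictAntiOn {i : ℕ} (hi : i ≤ K) :
    ∃ c, StrictMonoOn (fun j => tilt c (p j)) (Icc 0 i) ∧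
      StrictAntiOn (fun j => tilt c (p j)) (Icc i K) := by
  obtain ⟨c, hlt, hgt⟩ := exists_edgeSlope_lt_lt hs hi
  refine ⟨c, strictMonoOn_of_lt_add_one ordConnected_Icc fun j _ _ hj => ?_,
    strictAntiOn_of_add_one_lt ordConnected_Icc fun j _ hj hj' => ?_⟩
  · exact (tilt_lt_tilt_succ_iff (hx j ((Nat.lt_of_succ_le hj.2).trans_le hi)) c).2 (hlt j hj.2)
  · exact (tilt_succ_lt_tilt_iff (hx j hj'.2) c).2 (hgt j hj.1 hj'.2)

variable (hsym : p 0 = -p K)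
include hsym

lemma exists_forall_apply_lt {i : ℕ} (hi : i ≤ K) :
    ∃ l : ℝ × ℝ →ₗ[ℝ] ℝ, (∀ j ≤ K, j ≠ i → l (p j) < l (p i)) ∧
      ∀ j ∈ Ioo 0 K, l (-p j) < l (p i) := by
  obtain ⟨c, hmono, hanti⟩ := exists_tilt_strictMonoOn_strictAntiOn hx hs hi
  set f : ℕ → ℝ := fun j => tilt c (p j)
  have hpeak : ∀ j ≤ K, j ≠ i → f j < f i := fun j hj hji =>
    lt_of_strictMonoOn_Icc_of_strictAntiOn_Icc hmono hanti ⟨j.zero_le, hj⟩ hji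
  have hpeak' : ∀ j ≤ K, f j ≤ f i := fun j hj => by
    rcases eq_or_ne j i with rfl | hji
    exacts [le_rfl, (hpeak j hj hji).le]
  refine ⟨tilt c, hpeak, fun j hj => ?_⟩
  have hends : f 0 = -f K := by simp only [f, hsym, map_neg]
  rw [map_neg]
  rcases min_lt_iff.1 (min_lt_of_strictMonoOn_Icc_of_strictAntiOn_Icc hmono hanti hj) with h | h
  · linarith [hpeak' K le_rfl]
  · linarith [hpeak' 0 (Nat.zero_le K)]

lemma image_Iic_inter_neg_eq_pair : p '' Iic K ∩ -(p '' Iic K) = {p 0, p K} := by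
  apply Subset.antisymm
  · rintro _ ⟨⟨i, hi, rfl⟩, j, hj, hji⟩
    rcases Nat.eq_zero_or_pos j with rfl | hj0
    · exact Or.inr (mem_singleton_iff.2 (by rw [← neg_eq_iff_eq_neg.2 hji, hsym, neg_neg]))
    rcases (mem_Iic.1 hj).lt_or_eq with hjK | rfl
    · obtain ⟨l, -, hneg⟩ := exists_forall_apply_lt hx hs hsym hi
      simpa [hji] using hneg j ⟨hj0, hjK⟩
    · exact Or.inl (by rw [hsym]; exact neg_eq_iff_eq_neg.1 hji.symm)
  · have h0 : (0 : ℕ) ∈ Iic K := Nat.zero_le K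
    have hK : K ∈ Iic K := self_mem_Iic
    rintro _ (rfl | rfl)
    · exact ⟨mem_image_of_mem p h0, K, hK, by rw [hsym, neg_neg]⟩
    · exact ⟨mem_image_of_mem p hK, 0, h0, hsym⟩

lemma ncard_image_Iic_union_neg (hK : 0 < K) : (p '' Iic K ∪ -(p '' Iic K)).ncard = 2 * K := by
  have hfin : (p '' Iic K).Finite := (finite_Iic K).image p
  have hcard := ncard_union_add_ncard_inter _ _ hfin hfin.neg
  have hne : p 0 ≠ p K := fun h => hK.ne (injOn_Iic hx (Nat.zero_le K) self_mem_Iic h)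
  rw [image_Iic_inter_neg_eq_pair hx hs hsym, ncard_pair hne, ncard_neg,
    (injOn_Iic hx).ncard_image, ncard_Iic_nat] at hcard
  omega

lemma exists_forall_lt_of_le {i : ℕ} (hi : i ≤ K) : ∃ l : ℝ × ℝ →ₗ[ℝ] ℝ,
    ∀ y ∈ p '' Iic K ∪ -(p '' Iic K), y ≠ p i → l y < l (p i) := by
  obtain ⟨l, hpeak, hneg⟩ := exists_forall_apply_lt hx hs hsym hi
  have hpeak' : ∀ j ≤ K, p j ≠ p i → l (p j) < l (p i) := fun j hj hne =>
    hpeak j hj (by rintro rfl; exact hne rfl)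
  refine ⟨l, ?_⟩
  rintro y (⟨j, hj, rfl⟩ | ⟨j, hj, hjy⟩) hne
  · exact hpeak' j hj hne
  rw [← neg_eq_iff_eq_neg.2 hjy] at hne ⊢
  rcases Nat.eq_zero_or_pos j with rfl | hj0
  · rw [hsym, neg_neg] at hne ⊢
    exact hpeak' K le_rfl hne
  rcases (mem_Iic.1 hj).lt_or_eq with hjK | rfl
  · exact hneg j ⟨hj0, hjK⟩
  · rw [← hsym] at hne ⊢
    exact hpeak' 0 (Nat.zero_le _) hne

lemma image_Iic_union_neg_subset_extremePoints :
    p '' Iic K ∪ -(p '' Iic K) ⊆ (convexHull ℝ (p '' Iic K ∪ -(p '' Iic K))).extremePoints ℝ := by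
  rintro x (⟨i, hi, rfl⟩ | ⟨i, hi, hix⟩)
  · obtain ⟨l, hl⟩ := exists_forall_lt_of_le hx hs hsym hi
    exact mem_extremePoints_convexHull_of_forall_lt (mem_union_left _ ⟨i, hi, rfl⟩) hl
  · obtain ⟨l, hl⟩ := exists_forall_lt_of_le hx hs hsym hi
    rw [← neg_eq_iff_eq_neg.2 hix]
    exact mem_extremePoints_convexHull_of_forall_lt (mem_union_right _ ⟨i, hi, (neg_neg _).symm⟩)
      (forall_neg_lt_of_forall_lt (neg_union_neg_self _) hl)

end ConvexChain

open ConvexChain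

def intCastPoint : ℤ × ℤ →+ ℝ × ℝ := (Int.castAddHom ℝ).prodMap (Int.castAddHom ℝ)

lemma intCastPoint_apply (q : ℤ × ℤ) : intCastPoint q = ((q.1 : ℝ), (q.2 : ℝ)) := rfl

lemma symSet_eq_image_Iic_union_neg {k : ℕ} {v : Fin (k + 3) → ℤ × ℤ} {p : ℕ → ℝ × ℝ}
    (hp : ∀ t : Fin (k + 3), p t = intCastPoint (v t)) :
    symSet v = p '' Iic (k + 2) ∪ -(p '' Iic (k + 2)) := by
  have hrange : intCastPoint '' range v = p '' Iic (k + 2) := by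
    ext x
    constructor
    · rintro ⟨_, ⟨t, rfl⟩, rfl⟩
      exact ⟨t, Nat.lt_succ_iff.1 t.2, hp t⟩
    · rintro ⟨j, hj, rfl⟩
      exact ⟨_, mem_range_self _, (hp ⟨j, Nat.lt_succ_of_le hj⟩).symm⟩
  change intCastPoint '' (range v ∪ -range v) = _
  rw [image_union, image_neg, hrange]

/-- Isotropy data `v_0, …, v_{k+2}` of a compact toric anti-self-dual Einstein orbifold
give the vertices of a centrally symmetric convex polygon: the symmetrized set `S` satisfies
`S = −S`, has exactly `2k+4` elements, and every point of `S` is an extreme point of the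
convex hull of `S`. -/
theorem stmt5 (k : ℕ) (v : Fin (k + 3) → ℤ × ℤ)
    (hsym : v 0 = -v (Fin.last (k + 2)))
    (hmono : StrictMono fun i : Fin (k + 3) => (v i).1)
    (hconv : ∀ (i : ℕ) (h1 : 1 ≤ i) (h2 : i ≤ k + 1),
      ((v ⟨i + 1, by omega⟩).2 - (v ⟨i, by omega⟩).2) *
          ((v ⟨i, by omega⟩).1 - (v ⟨i - 1, by omega⟩).1) >
        ((v ⟨i, by omega⟩).2 - (v ⟨i - 1, by omega⟩).2) *
          ((v ⟨i + 1, by omega⟩).1 - (v ⟨i, by omega⟩).1)) :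
    symSet v = -symSet v ∧ (symSet v).ncard = 2 * k + 4 ∧
      ∀ x ∈ symSet v, x ∈ Set.extremePoints ℝ (convexHull ℝ (symSet v)) := by
  set p : ℕ → ℝ × ℝ := fun j => if h : j < k + 3 then intCastPoint (v ⟨j, h⟩) else 0
  have hp (j : ℕ) (hj : j < k + 3) : p j = intCastPoint (v ⟨j, hj⟩) := dif_pos hj
  have hx : ∀ j < k + 2, (p j).1 < (p (j + 1)).1 := fun j hj => by
    rw [hp j (by omega), hp (j + 1) (by omega), intCastPoint_apply, intCastPoint_apply,
      Int.cast_lt]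
    exact hmono (Fin.mk_lt_mk.2 (lt_add_one j))
  have hs : ∀ j, j + 1 < k + 2 → edgeSlope p j < edgeSlope p (j + 1) := fun j hj => by
    have h := hconv (j + 1) (by omega) (by omega)
    simp only [Nat.add_sub_cancel] at h
    rw [edgeSlope, edgeSlope, div_lt_div_iff₀ (sub_pos.2 (hx j (by omega)))
      (sub_pos.2 (hx (j + 1) hj)), hp j (by omega), hp (j + 1) (by omega),
      hp (j + 1 + 1) (by omega)]
    simp only [intCastPoint_apply]
    exact_mod_cast h
  have hends : p 0 = -p (k + 2) := by
    rw [hp 0 (by omega), hp (k + 2) (by omega), ← map_neg]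
    exact congrArg intCastPoint hsym
  rw [symSet_eq_image_Iic_union_neg fun t => hp t t.2]
  exact ⟨(neg_union_neg_self _).symm, ncard_image_Iic_union_neg hx hs hends (by omega),
    image_Iic_union_neg_subset_extremePoints hx hs hends⟩
end

section
/- Let k ≥ 1, let a, b ∈ ℤ^k, and let Ω be the k×(k+2) integer matrix whose first k columns form the identity, whose (k+1)-st column is a, and whose (k+2)-nd column is b; assume Ω is non-degenerate. For each spanning tree T on the vertex set {1,…,k+2}, let w(T) = ∏_{{p,q}∈T} |Δ_{p,q}|. Then the sum of w(T) over all spanning trees T on {1,…,k+2} is strictly greater than |a_1⋯a_k| + |b_1⋯b_k|. -/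
/-- For a `k × (k+2)` matrix, the minor `Δ_{p,q}` obtained by deleting columns `p` and `q`. -/
def deleteTwoMinor {k : ℕ} (Ω : Matrix (Fin k) (Fin (k+2)) ℤ) (p q : Fin (k+2)) : ℤ :=
  minorOn Ω ({p, q}ᶜ)

/-!
Three star-shaped spanning trees already give the bound. For `Ω = [I | a | b]`, deleting the
unit column `j` together with one of the columns `a`, `b` leaves the identity matrix with its
`j`-th column replaced by the other one, so that minor is `± a_j` resp. `± b_j`, while deleting
both `a` and `b` leaves `I`. Hence the star centred at the column `b` has weight `|a₁⋯a_k|`,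
the star centred at `a` has weight `|b₁⋯b_k|`, and the star centred at the first column (a third
tree when `k ≥ 1`) has weight at least `1`, since non-degeneracy makes all its factors nonzero
integers. All other trees have nonnegative weight.
-/

open Finset SimpleGraph

lemma abs_minorOn_image {k n : ℕ} (Ω : Matrix (Fin k) (Fin n) ℤ) {g : Fin k → Fin n}
    (hg : g.Injective) : |minorOn Ω (univ.image g)| = |(Ω.submatrix id g).det| := by
  have hcard : (univ.image g).card = k := by simp [card_image_of_injective _ hg]
  set e := (univ.image g).orderIsoOfFin hcard
  let σ : Fin k ≃ Fin k := Equiv.ofBijective (fun i => e.symm ⟨g i, by simp⟩)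
    (Finite.injective_iff_bijective.mp fun i j hij => hg (by simpa using hij))
  have hσ : (univ.image g).orderEmbOfFin hcard ∘ σ = g := by
    ext i; simp [σ, ← coe_orderIsoOfFin_apply, e]
  rw [minorOn, dif_pos hcard]
  conv_rhs => rw [← hσ]
  exact (Matrix.abs_det_submatrix_equiv_equiv (Equiv.refl _) σ _).symm

lemma Matrix.det_one_updateCol_s7 {n R : Type*} [Fintype n] [DecidableEq n] [CommRing R]
    (j : n) (v : n → R) : ((1 : Matrix n n R).updateCol j v).det = v j := by
  rw [← cramer_apply, cramer_one]; rfl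

lemma abs_minorOn_insert_erase {k n : ℕ} {Ω : Matrix (Fin k) (Fin n) ℤ} {e : Fin k → Fin n}
    (he : e.Injective) (hΩ : Ω.submatrix id e = 1) (j : Fin k) {c : Fin n}
    (hc : c ∉ univ.image e) :
    |minorOn Ω (insert c ((univ.image e).erase (e j)))| = |Ω j c| := by
  have hg : (Function.update e j c).Injective := fun x y hxy => by
    grind [Function.update_apply, he.eq_iff]
  have himage : univ.image (Function.update e j c) = insert c ((univ.image e).erase (e j)) := by
    ext x
    simp only [mem_image, mem_univ, true_and, mem_insert, mem_erase, Function.update_apply]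
    grind [he.eq_iff]
  have hsub : Ω.submatrix id (Function.update e j c) =
      (1 : Matrix _ _ ℤ).updateCol j (fun i => Ω i c) := by
    ext i t
    rcases eq_or_ne t j with rfl | ht
    · simp
    · simp [ht, ← hΩ]
  rw [← himage, abs_minorOn_image Ω hg, hsub, Matrix.det_one_updateCol_s7]

section weightMatrix

variable {k : ℕ} (a b : Fin k → ℤ)

@[simp]
lemma weightMatrix_castSucc_castSucc (i j : Fin k) :
    weightMatrix a b i j.castSucc.castSucc = (1 : Matrix (Fin k) (Fin k) ℤ) i j := by
  simp [weightMatrix, Matrix.one_apply, Fin.ext_iff]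

@[simp]
lemma weightMatrix_castSucc_last (i : Fin k) :
    weightMatrix a b i (Fin.last k).castSucc = a i := by
  simp [weightMatrix]

@[simp]
lemma weightMatrix_last (i : Fin k) : weightMatrix a b i (Fin.last (k + 1)) = b i := by
  simp [weightMatrix]

lemma image_castSucc_castSucc :
    univ.image (fun j : Fin k => j.castSucc.castSucc) =
      {(Fin.last k).castSucc, Fin.last (k + 1)}ᶜ := by
  ext x
  induction x using Fin.lastCases with
  | last => simp
  | cast y => induction y using Fin.lastCases with
    | last => simp
    | cast z => simp

lemma submatrix_weightMatrix_castSucc_castSucc :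
    (weightMatrix a b).submatrix id (fun j : Fin k => j.castSucc.castSucc) = 1 := by
  ext i j
  simp

lemma abs_deleteTwoMinor_weightMatrix_of_ne (j : Fin k) {c c' : Fin (k + 2)}
    (hcc' : ({c, c'} : Finset _) = {(Fin.last k).castSucc, Fin.last (k + 1)}) (hne : c ≠ c') :
    |deleteTwoMinor (weightMatrix a b) j.castSucc.castSucc c| = |weightMatrix a b j c'| := by
  have hc' : c' ∉ univ.image fun j : Fin k => j.castSucc.castSucc := by
    rw [image_castSucc_castSucc, ← hcc']; simp
  have key := abs_minorOn_insert_erase (e := fun j : Fin k => j.castSucc.castSucc)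
    ((Fin.castSucc_injective _).comp (Fin.castSucc_injective _))
    (submatrix_weightMatrix_castSucc_castSucc a b) j hc'
  rw [image_castSucc_castSucc, ← hcc'] at key
  rw [deleteTwoMinor, ← key]
  have hc'j : c' ≠ j.castSucc.castSucc := fun h => hc' (by simp [h])
  congr 2
  ext x
  simp only [mem_compl, mem_insert, mem_singleton, mem_erase]
  grind

lemma abs_deleteTwoMinor_weightMatrix_castSucc_castSucc_last (j : Fin k) :
    |deleteTwoMinor (weightMatrix a b) j.castSucc.castSucc (Fin.last (k + 1))| = |a j| := by
  simpa using abs_deleteTwoMinor_weightMatrix_of_ne a b j (pair_comm _ _)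
    (Fin.castSucc_lt_last _).ne'

lemma abs_deleteTwoMinor_weightMatrix_castSucc_castSucc_castSucc_last (j : Fin k) :
    |deleteTwoMinor (weightMatrix a b) j.castSucc.castSucc (Fin.last k).castSucc| = |b j| := by
  simpa using abs_deleteTwoMinor_weightMatrix_of_ne a b j rfl (Fin.castSucc_lt_last _).ne

lemma abs_deleteTwoMinor_weightMatrix_castSucc_last_last :
    |deleteTwoMinor (weightMatrix a b) (Fin.last k).castSucc (Fin.last (k + 1))| = 1 := by
  rw [deleteTwoMinor, ← image_castSucc_castSucc,
    abs_minorOn_image (g := fun j : Fin k => j.castSucc.castSucc) _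
      ((Fin.castSucc_injective _).comp (Fin.castSucc_injective _)),
    submatrix_weightMatrix_castSucc_castSucc, Matrix.det_one, abs_one]

end weightMatrix

lemma deleteTwoMinor_comm {k : ℕ} (Ω : Matrix (Fin k) (Fin (k + 2)) ℤ) (p q : Fin (k + 2)) :
    deleteTwoMinor Ω p q = deleteTwoMinor Ω q p := by
  rw [deleteTwoMinor, deleteTwoMinor, pair_comm]

lemma NonDegenerate.one_le_abs_deleteTwoMinor {k : ℕ} {Ω : Matrix (Fin k) (Fin (k + 2)) ℤ}
    (hΩ : NonDegenerate Ω) {p q : Fin (k + 2)} (hpq : p ≠ q) : 1 ≤ |deleteTwoMinor Ω p q| :=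
  Int.one_le_abs (hΩ _ (by simp [card_compl, hpq]))

lemma NonDegenerate.one_le_prod_abs_deleteTwoMinor {k : ℕ} {Ω : Matrix (Fin k) (Fin (k + 2)) ℤ}
    (hΩ : NonDegenerate Ω) {T : Finset (Fin (k + 2) × Fin (k + 2))} (hT : ∀ e ∈ T, e.1 ≠ e.2) :
    1 ≤ ∏ e ∈ T, |deleteTwoMinor Ω e.1 e.2| :=
  one_le_prod fun e he => hΩ.one_le_abs_deleteTwoMinor (hT e he)

namespace SimpleGraph

variable {V : Type*} [LinearOrder V] [Fintype V]

open Classical in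
noncomputable def orderedEdges (G : SimpleGraph V) : Finset (V × V) :=
  univ.filter fun e => e.1 < e.2 ∧ G.Adj e.1 e.2

@[simp]
lemma mem_orderedEdges {G : SimpleGraph V} {e : V × V} :
    e ∈ G.orderedEdges ↔ e.1 < e.2 ∧ G.Adj e.1 e.2 := by
  simp [orderedEdges]

lemma fromEdgeSet_orderedEdges (G : SimpleGraph V) :
    fromEdgeSet {s | ∃ e ∈ G.orderedEdges, s = s(e.1, e.2)} = G := by
  ext x y
  simp only [fromEdgeSet_adj, Set.mem_ofPred_eq, mem_orderedEdges, Sym2.eq_iff, Prod.exists]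
  constructor
  · grind [G.adj_symm]
  · intro h
    rcases lt_or_gt_of_ne h.ne with hxy | hxy
    · grind
    · grind [G.adj_symm]

lemma orderedEdges_injective : Function.Injective (orderedEdges (V := V)) := fun G H h => by
  rw [← G.fromEdgeSet_orderedEdges, ← H.fromEdgeSet_orderedEdges, h]

lemma starGraph_injective (h : 2 < Fintype.card V) : Function.Injective (starGraph (V := V)) := by
  intro c d hcd
  by_contra hne
  obtain ⟨v, -, hv⟩ := exists_mem_notMem_of_card_lt_card (s := {c, d}) (t := univ)
    (by simpa using (card_le_two (a := c) (b := d)).trans_lt h)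
  have hadj : (starGraph c).Adj v c := by grind [starGraph_adj]
  rw [hcd, starGraph_adj] at hadj
  grind

lemma prod_orderedEdges_starGraph {M : Type*} [CommMonoid M] (f : V → V → M)
    (hf : ∀ x y, f x y = f y x) (c : V) :
    ∏ e ∈ (starGraph c).orderedEdges, f e.1 e.2 = ∏ v ∈ {c}ᶜ, f v c := by
  refine prod_nbij' (fun e => if e.1 = c then e.2 else e.1) (fun v => (min v c, max v c))
    ?_ ?_ ?_ ?_ ?_ <;> simp only [mem_orderedEdges, starGraph_adj, mem_compl, mem_singleton] <;> grind

end SimpleGraph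

section starWeights

variable {k : ℕ} (a b : Fin k → ℤ)

lemma prod_orderedEdges_starGraph_last :
    ∏ e ∈ (starGraph (Fin.last (k + 1))).orderedEdges,
      |deleteTwoMinor (weightMatrix a b) e.1 e.2| = |∏ i, a i| := by
  rw [prod_orderedEdges_starGraph (fun p q => |deleteTwoMinor (weightMatrix a b) p q|)
    (fun p q => by rw [deleteTwoMinor_comm]), ← Fin.image_castSucc,
    prod_image (Fin.castSucc_injective _).injOn, Fin.prod_univ_castSucc, abs_prod]
  simp [abs_deleteTwoMinor_weightMatrix_castSucc_castSucc_last,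
    abs_deleteTwoMinor_weightMatrix_castSucc_last_last]

lemma prod_orderedEdges_starGraph_castSucc_last :
    ∏ e ∈ (starGraph (Fin.last k).castSucc).orderedEdges,
      |deleteTwoMinor (weightMatrix a b) e.1 e.2| = |∏ i, b i| := by
  rw [prod_orderedEdges_starGraph (fun p q => |deleteTwoMinor (weightMatrix a b) p q|)
    (fun p q => by rw [deleteTwoMinor_comm]),
    ← Fin.image_succAbove_univ, prod_image (Fin.succAbove_right_injective).injOn,
    Fin.prod_univ_castSucc, abs_prod]
  simp [abs_deleteTwoMinor_weightMatrix_castSucc_castSucc_castSucc_last,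
    deleteTwoMinor_comm _ (Fin.last (k + 1)), abs_deleteTwoMinor_weightMatrix_castSucc_last_last]

end starWeights

open scoped Classical in
/-- A spanning tree on the vertices `{1, …, k+2}`, encoded as a finite set `T` of ordered
pairs `(p, q)` with `p < q` (the canonical representatives of the unordered edges) such that
the resulting simple graph on `Fin (k+2)` is a tree.  Summing the weights
`w(T) = ∏_{{p,q} ∈ T} |Δ_{p,q}|` over all spanning trees gives a number strictly greater
than `|a₁⋯a_k| + |b₁⋯b_k|`. -/
theorem stmt7 {k : ℕ} (hk : 1 ≤ k) (a b : Fin k → ℤ)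
    (hnd : NonDegenerate (weightMatrix a b)) :
    (∑ T ∈ Finset.univ.filter
        (fun T : Finset (Fin (k+2) × Fin (k+2)) =>
          (∀ e ∈ T, e.1 < e.2) ∧
          (SimpleGraph.fromEdgeSet {s | ∃ e ∈ T, s = s(e.1, e.2)}).IsTree),
      ∏ e ∈ T, |deleteTwoMinor (weightMatrix a b) e.1 e.2|) >
    |∏ i, a i| + |∏ i, b i| := by
  set w := fun T : Finset (Fin (k + 2) × Fin (k + 2)) =>
    ∏ e ∈ T, |deleteTwoMinor (weightMatrix a b) e.1 e.2|
  set star := fun c : Fin (k + 2) => (starGraph c).orderedEdges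
  have hstar : Function.Injective star :=
    orderedEdges_injective.comp (starGraph_injective (by simp; omega))
  calc |∏ i, a i| + |∏ i, b i|
        < w (star (Fin.last (k + 1))) + w (star (Fin.last k).castSucc) + w (star 0) := by
        have := hnd.one_le_prod_abs_deleteTwoMinor (T := star 0)
          fun e he => (mem_orderedEdges.1 he).1.ne
        simp only [w, star, prod_orderedEdges_starGraph_last,
          prod_orderedEdges_starGraph_castSucc_last] at this ⊢
        linarith
    _ = ∑ c ∈ {Fin.last (k + 1), (Fin.last k).castSucc, 0}, w (star c) := by
        rw [sum_insert (by simp [Fin.ext_iff]), sum_pair (by simp [Fin.ext_iff]; omega),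
          add_assoc]
    _ ≤ _ := by
        rw [← sum_image hstar.injOn]
        refine sum_le_sum_of_subset_of_nonneg ?_ fun T _ _ => prod_nonneg fun e _ => abs_nonneg _
        intro T hT
        obtain ⟨c, -, rfl⟩ := mem_image.1 hT
        refine mem_filter.2 ⟨mem_univ _, fun e he => (mem_orderedEdges.1 he).1, ?_⟩
        rw [fromEdgeSet_orderedEdges]
        exact isTree_starGraph c
end

section
/- Let (X, μ) be a measure space with 0 < μ(X) < ∞ and let n ≥ 1 be an integer. Let (t_k) be a sequence of reals with n/(n+1) < t_k < 1 for all k, and let (φ_k) be a sequence of bounded measurable real-valued functions on X such that: (i) there exists c > 0 with ∫_X e^{−t_k·φ_k} dμ ≥ c for all k; (ii) for every ε > 0 there exists C > 0 such that −essinf φ_k ≤ (n+ε)·esssup φ_k + C for all k; and (iii) esssup φ_k → ∞ as k → ∞. Then for every γ with n/(n+1) < γ < 1, one has e^{γ·esssup φ_k} · ∫_X e^{−γ·φ_k} dμ → ∞ as k → ∞. -/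
open MeasureTheory Filter

/-- Measure-theoretic core of the proposition (after Tian and Siu) on sequences of solutions
of the Monge–Ampère equations: if `0 < μ(X) < ∞`, `n/(n+1) < t_k < 1`, the `φ_k` are bounded
measurable, `∫ e^{−t_k φ_k} dμ ≥ c > 0`, the Harnack-type inequality
`−essinf φ_k ≤ (n+ε)·esssup φ_k + C` holds, and `esssup φ_k → ∞`, then for every
`γ ∈ (n/(n+1), 1)` one has `e^{γ·esssup φ_k} ∫ e^{−γ φ_k} dμ → ∞`. -/
theorem stmt11 {X : Type*} [MeasurableSpace X] (μ : Measure X)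
    (hpos : 0 < μ Set.univ) (hfin : μ Set.univ < ⊤)
    (n : ℕ) (hn : 1 ≤ n)
    (t : ℕ → ℝ) (ht : ∀ k, (n : ℝ) / (n + 1) < t k ∧ t k < 1)
    (φ : ℕ → X → ℝ)
    (hmeas : ∀ k, Measurable (φ k))
    (hbdd : ∀ k, ∃ M : ℝ, ∀ x, |φ k x| ≤ M)
    (h1 : ∃ c > (0 : ℝ), ∀ k, c ≤ ∫ x, Real.exp (-(t k) * φ k x) ∂μ)
    (h2 : ∀ ε > (0 : ℝ), ∃ C > (0 : ℝ), ∀ k,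
      -essInf (φ k) μ ≤ ((n : ℝ) + ε) * essSup (φ k) μ + C)
    (h3 : Tendsto (fun k => essSup (φ k) μ) atTop atTop) :
    ∀ γ : ℝ, (n : ℝ) / (n + 1) < γ → γ < 1 →
      Tendsto (fun k => Real.exp (γ * essSup (φ k) μ) * ∫ x, Real.exp (-γ * φ k x) ∂μ)
        atTop atTop := by
  intro γ hγ1 hγ2
  haveI : IsFiniteMeasure μ := ⟨hfin⟩
  obtain ⟨c, hc0, hc⟩ := h1
  have hn0 : (0:ℝ) < (n:ℝ) := by exact_mod_cast hn
  have hn1 : (0:ℝ) < (n:ℝ) + 1 := by positivity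
  have hnn : (0:ℝ) < (n:ℝ) / ((n:ℝ) + 1) := by positivity
  have hγ0 : 0 < γ := hnn.trans hγ1
  have hD : 0 < γ * ((n:ℝ) + 1) - n := by
    have := (div_lt_iff₀ hn1).mp hγ1; linarith
  set D := γ * ((n:ℝ) + 1) - n with hDdef
  have h1γ : 0 < 1 - γ := by linarith
  set ε := D / (2 * (1 - γ)) with hεdef
  have hε : 0 < ε := by positivity
  obtain ⟨C, hC0, hC⟩ := h2 ε hε
  set A := min (D / 2) ((n:ℝ) / ((n:ℝ) + 1)) with hAdef
  have hA0 : 0 < A := lt_min (by positivity) hnn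
  have key : ∀ k, 0 ≤ essSup (φ k) μ →
      c * Real.exp (A * essSup (φ k) μ - (1 - γ) * C)
        ≤ Real.exp (γ * essSup (φ k) μ) * ∫ x, Real.exp (-γ * φ k x) ∂μ := by
    intro k hS0
    obtain ⟨M, hM⟩ := hbdd k
    set S := essSup (φ k) μ with hSdef
    set I := essInf (φ k) μ with hIdef
    have hbddS : IsBoundedUnder (· ≤ ·) (ae μ) (φ k) :=
      Filter.isBoundedUnder_of ⟨M, fun x => (abs_le.mp (hM x)).2⟩
    have hbddI : IsBoundedUnder (· ≥ ·) (ae μ) (φ k) :=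
      Filter.isBoundedUnder_of ⟨-M, fun x => (abs_le.mp (hM x)).1⟩
    have hle : ∀ᵐ x ∂μ, φ k x ≤ S := ae_le_essSup hbddS
    have hge : ∀ᵐ x ∂μ, I ≤ φ k x := ae_essInf_le hbddI
    have hint : ∀ a : ℝ, Integrable (fun x => Real.exp (a * φ k x)) μ := by
      intro a
      refine Integrable.mono' (integrable_const (Real.exp (|a| * M)))
        ((Real.measurable_exp.comp ((measurable_const).mul (hmeas k))).aestronglyMeasurable)
        (Filter.Eventually.of_forall fun x => ?_)
      rw [Real.norm_eq_abs, Real.abs_exp]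
      apply Real.exp_le_exp.mpr
      calc a * φ k x ≤ |a * φ k x| := le_abs_self _
        _ = |a| * |φ k x| := abs_mul _ _
        _ ≤ |a| * M := by
            exact mul_le_mul_of_nonneg_left (hM x) (abs_nonneg a)
    have htk := ht k
    -- lower bound ∫ e^{-γφ} ≥ c * exp L for suitable L
    have main : ∃ L : ℝ, c * Real.exp L ≤ (∫ x, Real.exp (-γ * φ k x) ∂μ) ∧
        A * S - (1 - γ) * C ≤ γ * S + L := by
      rcases le_or_gt (t k) γ with hcase | hcase
      · refine ⟨(t k - γ) * S, ?_, ?_⟩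
        · have hmono : ∫ x, Real.exp (-(t k) * φ k x) ∂μ
              ≤ ∫ x, Real.exp ((γ - t k) * S) * Real.exp (-γ * φ k x) ∂μ := by
            refine integral_mono_ae (hint (-(t k))) ((hint (-γ)).const_mul _) ?_
            filter_upwards [hle] with x hx
            rw [← Real.exp_add]
            apply Real.exp_le_exp.mpr
            nlinarith [mul_le_mul_of_nonneg_left hx (sub_nonneg.mpr hcase)]
          rw [integral_const_mul] at hmono
          have h2' : c ≤ Real.exp ((γ - t k) * S) * ∫ x, Real.exp (-γ * φ k x) ∂μ :=
            (hc k).trans hmono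
          have := mul_le_mul_of_nonneg_left h2' (Real.exp_pos ((t k - γ) * S)).le
          calc c * Real.exp ((t k - γ) * S) = Real.exp ((t k - γ) * S) * c := mul_comm _ _
            _ ≤ Real.exp ((t k - γ) * S) *
                (Real.exp ((γ - t k) * S) * ∫ x, Real.exp (-γ * φ k x) ∂μ) := this
            _ = ∫ x, Real.exp (-γ * φ k x) ∂μ := by
                rw [← mul_assoc, ← Real.exp_add]
                ring_nf
                simp
        · have hAle : A ≤ (n:ℝ) / ((n:ℝ) + 1) := min_le_right _ _
          have : A * S ≤ t k * S :=
            mul_le_mul_of_nonneg_right (hAle.trans htk.1.le) hS0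
          nlinarith [mul_nonneg h1γ.le hC0.le]
      · refine ⟨(t k - γ) * I, ?_, ?_⟩
        · have hmono : ∫ x, Real.exp (-(t k) * φ k x) ∂μ
              ≤ ∫ x, Real.exp ((γ - t k) * I) * Real.exp (-γ * φ k x) ∂μ := by
            refine integral_mono_ae (hint (-(t k))) ((hint (-γ)).const_mul _) ?_
            filter_upwards [hge] with x hx
            rw [← Real.exp_add]
            apply Real.exp_le_exp.mpr
            nlinarith [mul_le_mul_of_nonpos_left hx (by linarith : γ - t k ≤ 0)]
          rw [integral_const_mul] at hmono
          have h2' : c ≤ Real.exp ((γ - t k) * I) * ∫ x, Real.exp (-γ * φ k x) ∂μ :=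
            (hc k).trans hmono
          have := mul_le_mul_of_nonneg_left h2' (Real.exp_pos ((t k - γ) * I)).le
          calc c * Real.exp ((t k - γ) * I) = Real.exp ((t k - γ) * I) * c := mul_comm _ _
            _ ≤ Real.exp ((t k - γ) * I) *
                (Real.exp ((γ - t k) * I) * ∫ x, Real.exp (-γ * φ k x) ∂μ) := this
            _ = ∫ x, Real.exp (-γ * φ k x) ∂μ := by
                rw [← mul_assoc, ← Real.exp_add]
                ring_nf
                simp
        · -- γ*S + (t-γ)*I ≥ A*S - (1-γ)*C
          have hI : -((( (n:ℝ) + ε) * S) + C) ≤ I := by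
            have := hC k
            rw [← hSdef, ← hIdef] at this
            linarith
          have htγ : 0 ≤ t k - γ := by linarith
          have h5 : (t k - γ) * (-((((n:ℝ) + ε) * S) + C)) ≤ (t k - γ) * I :=
            mul_le_mul_of_nonneg_left hI htγ
          have h6 : t k - γ ≤ 1 - γ := by linarith [htk.2]
          have hQ : 0 ≤ ((n:ℝ) + ε) * S + C := by positivity
          have h7 : (1 - γ) * (((n:ℝ) + ε) * S + C) ≥ (t k - γ) * (((n:ℝ) + ε) * S + C) :=
            mul_le_mul_of_nonneg_right h6 hQ
          -- γ - (1-γ)*(n+ε) = D/2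
          have hδ : γ - (1 - γ) * ((n:ℝ) + ε) = D / 2 := by
            rw [hεdef]
            field_simp
            ring
          have hAle : A ≤ D / 2 := min_le_left _ _
          have hAS : A * S ≤ (D / 2) * S := mul_le_mul_of_nonneg_right hAle hS0
          nlinarith
    obtain ⟨L, hL1, hL2⟩ := main
    calc c * Real.exp (A * S - (1 - γ) * C)
        ≤ c * Real.exp (γ * S + L) := by
          exact mul_le_mul_of_nonneg_left (Real.exp_le_exp.mpr hL2) hc0.le
      _ = Real.exp (γ * S) * (c * Real.exp L) := by rw [Real.exp_add]; ring
      _ ≤ Real.exp (γ * S) * ∫ x, Real.exp (-γ * φ k x) ∂μ :=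
          mul_le_mul_of_nonneg_left hL1 (Real.exp_pos _).le
  -- conclude
  have hlow : Tendsto (fun k => c * Real.exp (A * essSup (φ k) μ - (1 - γ) * C)) atTop atTop := by
    apply Tendsto.const_mul_atTop hc0
    apply Real.tendsto_exp_atTop.comp
    apply tendsto_atTop_add_const_right
    exact (tendsto_const_mul_atTop_of_pos hA0).mpr h3
  refine tendsto_atTop_mono' atTop ?_ hlow
  filter_upwards [h3.eventually_ge_atTop 0] with k hk
  exact key k hk
end
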